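/- The cross-ratio datum T = ((1,2,3,5),(1,2,4,6),(1,3,6,7),(2,4,7,8),(3,4,5,8)) on 8 points has cross-ratio degree exactly 3: there exists a nonzero polynomial q ∈ ℂ[x₁,…,x₅] such that for every (a₁,…,a₅) ∈ (ℂ∖{0,1})⁵ with q(a₁,…,a₅) ≠ 0, the set of tuples (p₁,…,p₈) of pairwise distinct points of ℙ¹(ℂ) with p₁ = ∞, p₂ = 0, p₃ = 1 satisfying CR(p₁,p₂,p₃,p₅)=a₁, CR(p₁,p₂,p₄,p₆)=a₂, CR(p₁,p₃,p₆,p₇)=a₃, CR(p₂,p₄,p₇,p₈)=a₄, CR(p₃,p₄,p₅,p₈)=a₅ has exactly 3 elements. -/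

import Mathlib

/-!
Normalise `p₁, p₂, p₃ = ∞, 0, 1` and put `t = p₄`. The first, second, third and fifth cross-ratio
conditions are each Möbius in one new point and give `p₅, p₆, p₇, p₈` as rational functions of `t`;
the fourth condition then says that `t` is a root of an explicit cubic. Solutions are therefore the
roots of this cubic at which the eight points stay pairwise distinct. Take `q` to be the product
of the discriminant of the cubic and of one resultant-type factor for every coincidence `pᵢ = pⱼ`
(or vanishing denominator) that is not excluded by `aᵢ ∉ {0, 1}` alone: where `q ≠ 0` the cubic has
three distinct roots and every one of them gives a solution.
-/

open OnePoint

/-- Cross-ratio of four points of `ℙ¹(ℂ) = OnePoint ℂ`: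
`CR(z₁,z₂,z₃,z₄) = ((z₃−z₁)(z₄−z₂))/((z₃−z₂)(z₄−z₁))` when all points are finite,
extended to one point at infinity by omitting the two factors containing it. -/
noncomputable def CR : OnePoint ℂ → OnePoint ℂ → OnePoint ℂ → OnePoint ℂ → ℂ
  | Option.none,    Option.some z₂, Option.some z₃, Option.some z₄ => (z₄ - z₂) / (z₃ - z₂)
  | Option.some z₁, Option.none,    Option.some z₃, Option.some z₄ => (z₃ - z₁) / (z₄ - z₁)
  | Option.some z₁, Option.some z₂, Option.none,    Option.some z₄ => (z₄ - z₂) / (z₄ - z₁)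
  | Option.some z₁, Option.some z₂, Option.some z₃, Option.none    => (z₃ - z₁) / (z₃ - z₂)
  | Option.some z₁, Option.some z₂, Option.some z₃, Option.some z₄ =>
      ((z₃ - z₁) * (z₄ - z₂)) / ((z₃ - z₂) * (z₄ - z₁))
  | _, _, _, _ => 0

theorem CR_infty_coe (z₂ z₃ z₄ : ℂ) : CR ∞ z₂ z₃ z₄ = (z₄ - z₂) / (z₃ - z₂) := rfl

theorem CR_coe (z₁ z₂ z₃ z₄ : ℂ) :
    CR z₁ z₂ z₃ z₄ = (z₃ - z₁) * (z₄ - z₂) / ((z₃ - z₂) * (z₄ - z₁)) := rfl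

namespace OnePoint

variable {X : Type*} {n : ℕ}

theorem cons_infty_injective_iff {z : Fin n → X} :
    Function.Injective (Fin.cons ∞ fun i ↦ (z i : OnePoint X) : Fin (n + 1) → OnePoint X) ↔
      Function.Injective z := by
  rw [Fin.cons_injective_iff, ← Function.comp_def, coe_injective.of_comp_iff]
  simp

theorem exists_eq_cons_infty {p : Fin (n + 1) → OnePoint X} (hp : Function.Injective p)
    (h0 : p 0 = ∞) : ∃ z : Fin n → X, p = Fin.cons ∞ fun i ↦ (z i : OnePoint X) := by
  have hfin (i : Fin n) : ∃ x : X, (x : OnePoint X) = p i.succ :=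
    ne_infty_iff_exists.mp (h0 ▸ hp.ne (Fin.succ_ne_zero i))
  choose z hz using hfin
  exact ⟨z, funext fun i ↦ Fin.cases (by simpa using h0) (by simp [hz]) i⟩

end OnePoint

namespace Cubic

variable {R : Type*} [CommRing R]

def homEval (P : Cubic R) (n d : R) : R :=
  P.a * n ^ 3 + P.b * n ^ 2 * d + P.c * n * d ^ 2 + P.d * d ^ 3

/-- `q₂² · Res(P, q₂X² + q₁X + q₀)`, computed through the remainder `r₁X + r₀` of `q₂²P` modulo
the quadratic. -/
def quadResultant (P : Cubic R) (q₂ q₁ q₀ : R) : R :=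
  let r₁ := P.c * q₂ ^ 2 - P.a * q₀ * q₂ - P.b * q₁ * q₂ + P.a * q₁ ^ 2
  let r₀ := P.d * q₂ ^ 2 - P.b * q₀ * q₂ + P.a * q₀ * q₁
  q₂ * r₀ ^ 2 - q₁ * r₀ * r₁ + q₀ * r₁ ^ 2

variable {P : Cubic R} {t : R}

theorem mul_ne_of_homEval_ne_zero (ht : P.a * t ^ 3 + P.b * t ^ 2 + P.c * t + P.d = 0) {n d : R}
    (h : P.homEval n d ≠ 0) : d * t ≠ n := by
  intro hn
  apply h
  rw [homEval]
  linear_combination d ^ 3 * ht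
    - (P.a * (n ^ 2 + n * d * t + d ^ 2 * t ^ 2) + P.b * d * (n + d * t) + P.c * d ^ 2) * hn

theorem quadratic_ne_zero_of_quadResultant_ne_zero
    (ht : P.a * t ^ 3 + P.b * t ^ 2 + P.c * t + P.d = 0) {q₂ q₁ q₀ : R}
    (h : P.quadResultant q₂ q₁ q₀ ≠ 0) : q₂ * t ^ 2 + q₁ * t + q₀ ≠ 0 := by
  intro hQ
  set r₁ := P.c * q₂ ^ 2 - P.a * q₀ * q₂ - P.b * q₁ * q₂ + P.a * q₁ ^ 2
  set r₀ := P.d * q₂ ^ 2 - P.b * q₀ * q₂ + P.a * q₀ * q₁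
  have hrem : r₁ * t + r₀ = 0 := by
    linear_combination q₂ ^ 2 * ht - (P.a * q₂ * t + P.b * q₂ - P.a * q₁) * hQ
  apply h
  rw [quadResultant]
  linear_combination r₁ ^ 2 * hQ + (q₂ * (r₀ - r₁ * t) - q₁ * r₁) * hrem

theorem card_roots_toFinset_eq_three {K : Type*} [Field K] [IsAlgClosed K] [DecidableEq K]
    {P : Cubic K} (ha : P.a ≠ 0) (hd : P.discr ≠ 0) : P.roots.toFinset.card = 3 :=
  card_roots_of_discr_ne_zero (φ := RingHom.id K) ha (IsAlgClosed.splits _) hd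

theorem eq_zero_of_mem_roots [IsDomain R] (ht : t ∈ P.roots) :
    P.a * t ^ 3 + P.b * t ^ 2 + P.c * t + P.d = 0 :=
  (mem_roots_iff (Polynomial.ne_zero_of_mem_roots ht) t).mp ht

end Cubic

theorem ne_div_of_sub_mul_ne_zero {K : Type*} [DivisionRing K] {n d c : K} (hd : d ≠ 0)
    (h : n - c * d ≠ 0) : c ≠ n / d := by
  rw [ne_eq, eq_div_iff hd]
  exact fun hc ↦ h (by rw [hc, sub_self])

namespace CrossRatioT1

section CommRing

variable {R : Type*} [CommRing R]

def solutionCubic (a : Fin 5 → R) : Cubic R where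
  a := a 1 * a 2 * a 4
  b := a 1 * a 2 * (a 0 - 1 - a 4 * a 0) + (1 - a 2) * a 4
    - (a 0 - 1 + a 4) * (a 1 * a 2 * (1 - a 3) + a 3)
  c := (1 - a 2) * (a 0 - 1 - a 4 * a 0) - (a 0 - 1 + a 4) * ((1 - a 2) * (1 - a 3))
    + a 4 * a 0 * (a 1 * a 2 * (1 - a 3) + a 3)
  d := a 4 * a 0 * ((1 - a 2) * (1 - a 3))

theorem solutionCubic_eval (a : Fin 5 → R) (t : R) :
    (solutionCubic a).a * t ^ 3 + (solutionCubic a).b * t ^ 2 + (solutionCubic a).c * t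
      + (solutionCubic a).d =
    (a 1 * a 2 * t + 1 - a 2) * t * (a 4 * t + (a 0 - 1 - a 4 * a 0))
      - ((a 0 - 1 + a 4) * t - a 4 * a 0) * ((a 1 * a 2 * (1 - a 3) + a 3) * t
        + (1 - a 2) * (1 - a 3)) := by
  simp only [solutionCubic]
  ring

/-- A factor `P.homEval n d` rules out `d * t = n` at a root `t` of `P`, i.e. one coincidence of
two points or a vanishing denominator; the two `quadResultant` factors rule out `p₆ = p₈` and
`p₇ = p₈`, and the discriminant makes the three roots distinct. -/
def genericityFactor (a : Fin 5 → R) : R :=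
  let P := solutionCubic a
  P.homEval 1 1 * P.homEval (a 0) 1 * P.homEval 1 (a 1) * P.homEval (a 0) (a 1) *
    P.homEval (a 2 - 1) (a 1 * a 2) * P.homEval (a 2 - 1) (a 1 * a 2 - 1) *
    P.homEval (a 0 - 1 + a 2) (a 1 * a 2) * P.homEval (1 - a 0 + a 4 * a 0) (a 4) *
    P.homEval (a 4 * a 0) (a 0 - 1 + a 4) *
    P.quadResultant (a 1 * a 4) (a 1 * (a 0 - 1 - a 4 * a 0) - (a 0 - 1 + a 4)) (a 4 * a 0) *
    P.quadResultant (a 1 * a 2 * a 4)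
      (a 1 * a 2 * (a 0 - 1 - a 4 * a 0) + (1 - a 2) * a 4 - (a 0 - 1 + a 4))
      ((1 - a 2) * (a 0 - 1 - a 4 * a 0) + a 4 * a 0) *
    P.discr

theorem map_genericityFactor {S : Type*} [CommRing S] (f : R →+* S) (a : Fin 5 → R) :
    f (genericityFactor a) = genericityFactor (f ∘ a) := by
  simp only [genericityFactor, solutionCubic, Cubic.homEval, Cubic.quadResultant, Cubic.discr,
    map_mul, map_add, map_sub, map_pow, map_one, map_ofNat, Function.comp_apply]

end CommRing

open MvPolynomial in
noncomputable def genericityPoly : MvPolynomial (Fin 5) ℂ := genericityFactor X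

theorem eval_genericityPoly (a : Fin 5 → ℂ) :
    MvPolynomial.eval a genericityPoly = genericityFactor a := by
  rw [genericityPoly, map_genericityFactor]
  congr 1
  ext i
  simp

theorem genericityPoly_ne_zero : genericityPoly ≠ 0 := by
  have hval : genericityFactor (![4, 3, 6, 3, 9] : Fin 5 → ℂ) ≠ 0 := by
    simp only [genericityFactor, solutionCubic, Cubic.homEval, Cubic.quadResultant, Cubic.discr,
      Matrix.cons_val]
    norm_num
  intro h
  apply hval
  rw [← eval_genericityPoly, h, map_zero]

section Field

variable {K : Type*} [Field K] {a : Fin 5 → K} {t : K}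

theorem solutionCubic_a_ne_zero (ha : ∀ i, a i ≠ 0 ∧ a i ≠ 1) : (solutionCubic a).a ≠ 0 :=
  mul_ne_zero (mul_ne_zero (ha 1).1 (ha 2).1) (ha 4).1

theorem solutionCubic_d_ne_zero (ha : ∀ i, a i ≠ 0 ∧ a i ≠ 1) : (solutionCubic a).d ≠ 0 := by
  have h (i : Fin 5) : 1 - a i ≠ 0 := sub_ne_zero.2 (ha i).2.symm
  exact mul_ne_zero (mul_ne_zero (ha 4).1 (ha 0).1) (mul_ne_zero (h 2) (h 3))

theorem den_ne_zero_of_mem_roots (hq : genericityFactor a ≠ 0)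
    (ht : t ∈ (solutionCubic a).roots) : a 4 * t + (a 0 - 1 - a 4 * a 0) ≠ 0 := by
  simp only [genericityFactor, mul_ne_zero_iff, and_assoc] at hq
  obtain ⟨-, -, -, -, -, -, -, hD, -⟩ := hq
  exact fun h ↦ Cubic.mul_ne_of_homEval_ne_zero (Cubic.eq_zero_of_mem_roots ht) hD
    (by linear_combination h)

def finitePoints (a : Fin 5 → K) (t : K) : Fin 7 → K :=
  ![0, 1, t, a 0, a 1 * t, a 1 * a 2 * t + 1 - a 2,
    ((a 0 - 1 + a 4) * t - a 4 * a 0) / (a 4 * t + (a 0 - 1 - a 4 * a 0))]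

theorem ne_of_mem_roots (ha : ∀ i, a i ≠ 0 ∧ a i ≠ 1) (hq : genericityFactor a ≠ 0)
    (ht : t ∈ (solutionCubic a).roots) :
    t ≠ 0 ∧ t ≠ 1 ∧ t ≠ a 0 ∧ a 1 * t ≠ 1 ∧ a 1 * t ≠ a 0 ∧ a 1 * a 2 * t + 1 - a 2 ≠ 0 ∧
      a 1 * a 2 * t + 1 - a 2 ≠ t ∧ a 1 * a 2 * t + 1 - a 2 ≠ a 0 ∧
      (a 0 - 1 + a 4) * t - a 4 * a 0 ≠ 0 := by
  have hroot := Cubic.eq_zero_of_mem_roots ht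
  have avoid {n d : K} := Cubic.mul_ne_of_homEval_ne_zero hroot (n := n) (d := d)
  simp only [genericityFactor, mul_ne_zero_iff, and_assoc] at hq
  obtain ⟨ht1, htx, hu1, hux, hv0, hvt, hvx, -, hN, -⟩ := hq
  refine ⟨?_, by simpa using avoid ht1, by simpa using avoid htx, avoid hu1, avoid hux,
    fun h ↦ avoid hv0 (by linear_combination h), fun h ↦ avoid hvt (by linear_combination h),
    fun h ↦ avoid hvx (by linear_combination h), fun h ↦ avoid hN (by linear_combination h)⟩
  rintro rfl
  exact solutionCubic_d_ne_zero ha (by simpa using hroot)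

theorem finitePoints_injective (ha : ∀ i, a i ≠ 0 ∧ a i ≠ 1) (hq : genericityFactor a ≠ 0)
    (ht : t ∈ (solutionCubic a).roots) : Function.Injective (finitePoints a t) := by
  have hroot := Cubic.eq_zero_of_mem_roots ht
  have hD := den_ne_zero_of_mem_roots hq ht
  obtain ⟨ht0, ht1, htx, hu1, hux, hv0, hvt, hvx, hN⟩ := ne_of_mem_roots ha hq ht
  simp only [genericityFactor, mul_ne_zero_iff, and_assoc] at hq
  obtain ⟨-, -, -, -, -, -, -, -, -, huw, hvw, -⟩ := hq
  obtain ⟨hx0, hx1⟩ := ha 0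
  obtain ⟨ha10, ha11⟩ := ha 1
  obtain ⟨ha20, ha21⟩ := ha 2
  obtain ⟨ha40, ha41⟩ := ha 4
  have htu : t ≠ a 1 * t := fun h ↦ ha11 (mul_right_cancel₀ ht0 (by linear_combination -h))
  have hv1 : a 1 * a 2 * t + 1 - a 2 ≠ 1 := fun h ↦
    mul_ne_zero ha20 (sub_ne_zero.2 hu1) (by linear_combination h)
  have huv : a 1 * t ≠ a 1 * a 2 * t + 1 - a 2 := fun h ↦
    mul_ne_zero (sub_ne_zero.2 ha21.symm) (sub_ne_zero.2 hu1) (by linear_combination h)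
  have hw (c : K) := ne_div_of_sub_mul_ne_zero (n := (a 0 - 1 + a 4) * t - a 4 * a 0) (c := c) hD
  have hw0 := hw 0 fun h ↦ hN (by linear_combination h)
  have hw1 := hw 1 fun h ↦
    mul_ne_zero (sub_ne_zero.2 hx1) (sub_ne_zero.2 ht1) (by linear_combination h)
  have htw := hw t fun h ↦
    mul_ne_zero ha40 (mul_ne_zero (sub_ne_zero.2 ht1) (sub_ne_zero.2 htx)) (by linear_combination -h)
  have hxw := hw (a 0) fun h ↦ mul_ne_zero (mul_ne_zero
    (sub_ne_zero.2 hx1) (sub_ne_zero.2 ha41.symm)) (sub_ne_zero.2 htx) (by linear_combination h)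
  have huw := hw (a 1 * t) fun h ↦
    Cubic.quadratic_ne_zero_of_quadResultant_ne_zero hroot huw (by linear_combination -h)
  have hvw := hw (a 1 * a 2 * t + 1 - a 2) fun h ↦
    Cubic.quadratic_ne_zero_of_quadResultant_ne_zero hroot hvw (by linear_combination -h)
  rw [finitePoints, ← List.nodup_ofFn]
  simp only [List.ofFn_succ, List.ofFn_zero, Matrix.cons_val_zero, Matrix.cons_val_succ,
    List.nodup_cons, List.mem_cons, List.not_mem_nil, List.nodup_nil, not_or, or_false, and_true,
    not_false_eq_true]
  exact ⟨⟨zero_ne_one, ht0.symm, hx0.symm, (mul_ne_zero ha10 ht0).symm, hv0.symm, hw0⟩,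
    ⟨ht1.symm, hx1.symm, hu1.symm, hv1.symm, hw1⟩, ⟨htx, htu, hvt.symm, htw⟩,
    ⟨hux.symm, hvx.symm, hxw⟩, ⟨huv, huw⟩, hvw⟩

end Field

section Complex

variable {a : Fin 5 → ℂ} {t : ℂ}

def IsSolution (a : Fin 5 → ℂ) (p : Fin 8 → OnePoint ℂ) : Prop :=
  Function.Injective p ∧ p 0 = ∞ ∧ p 1 = ((0 : ℂ) : OnePoint ℂ) ∧
    p 2 = ((1 : ℂ) : OnePoint ℂ) ∧
    CR (p 0) (p 1) (p 2) (p 4) = a 0 ∧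
    CR (p 0) (p 1) (p 3) (p 5) = a 1 ∧
    CR (p 0) (p 2) (p 5) (p 6) = a 2 ∧
    CR (p 1) (p 3) (p 6) (p 7) = a 3 ∧
    CR (p 2) (p 3) (p 4) (p 7) = a 4

noncomputable def config (a : Fin 5 → ℂ) (t : ℂ) : Fin 8 → OnePoint ℂ :=
  Fin.cons ∞ fun i ↦ ((finitePoints a t i : ℂ) : OnePoint ℂ)

theorem config_injective : Function.Injective (config a) :=
  fun _ _ h ↦ OnePoint.coe_injective (congrFun h 3)

theorem isSolution_config (ha : ∀ i, a i ≠ 0 ∧ a i ≠ 1) (hq : genericityFactor a ≠ 0)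
    (ht : t ∈ (solutionCubic a).roots) : IsSolution a (config a t) := by
  have hinj := finitePoints_injective ha hq ht
  have ht0 : t ≠ 0 := hinj.ne (by decide : (2 : Fin 7) ≠ 0)
  have hu1 : a 1 * t ≠ 1 := hinj.ne (by decide : (4 : Fin 7) ≠ 1)
  have hvt : a 1 * a 2 * t + 1 - a 2 ≠ t := hinj.ne (by decide : (5 : Fin 7) ≠ 2)
  have htx : t ≠ a 0 := hinj.ne (by decide : (2 : Fin 7) ≠ 3)
  have hw0 : finitePoints a t 6 ≠ 0 := hinj.ne (by decide : (6 : Fin 7) ≠ 0)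
  have hw1 : finitePoints a t 6 ≠ 1 := hinj.ne (by decide : (6 : Fin 7) ≠ 1)
  have hD := den_ne_zero_of_mem_roots hq ht
  have hW : finitePoints a t 6 * (a 4 * t + (a 0 - 1 - a 4 * a 0)) =
      (a 0 - 1 + a 4) * t - a 4 * a 0 := div_mul_cancel₀ _ hD
  have hroot := solutionCubic_eval a t ▸ Cubic.eq_zero_of_mem_roots ht
  refine ⟨OnePoint.cons_infty_injective_iff.2 hinj, rfl, rfl, rfl, ?_, ?_, ?_, ?_, ?_⟩
  · show CR ∞ ↑(0 : ℂ) ↑(1 : ℂ) ↑(a 0) = a 0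
    simp [CR_infty_coe]
  · show CR ∞ ↑(0 : ℂ) ↑t ↑(a 1 * t) = a 1
    rw [CR_infty_coe]
    field_simp
    ring
  · show CR ∞ ↑(1 : ℂ) ↑(a 1 * t) ↑(a 1 * a 2 * t + 1 - a 2) = a 2
    rw [CR_infty_coe, div_eq_iff (sub_ne_zero.2 hu1)]
    ring
  · show CR ↑(0 : ℂ) ↑t ↑(a 1 * a 2 * t + 1 - a 2) ↑(finitePoints a t 6) = a 3
    rw [CR_coe, div_eq_iff (mul_ne_zero (sub_ne_zero.2 hvt) (by simpa using hw0))]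
    have key : (finitePoints a t 6 * ((a 1 * a 2 * (1 - a 3) + a 3) * t + (1 - a 2) * (1 - a 3))
        - (a 1 * a 2 * t + 1 - a 2) * t) * (a 4 * t + (a 0 - 1 - a 4 * a 0)) = 0 := by
      linear_combination ((a 1 * a 2 * (1 - a 3) + a 3) * t + (1 - a 2) * (1 - a 3)) * hW - hroot
    linear_combination (mul_eq_zero.1 key).resolve_right hD
  · show CR ↑(1 : ℂ) ↑t ↑(a 0) ↑(finitePoints a t 6) = a 4
    rw [CR_coe, div_eq_iff (mul_ne_zero (sub_ne_zero.2 htx.symm) (sub_ne_zero.2 hw1))]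
    linear_combination hW

theorem exists_config_eq (ha : ∀ i, a i ≠ 0 ∧ a i ≠ 1) (hq : genericityFactor a ≠ 0)
    {p : Fin 8 → OnePoint ℂ} (hp : IsSolution a p) :
    ∃ t ∈ (solutionCubic a).roots, config a t = p := by
  obtain ⟨hinj, h0, h1, h2, e1, e2, e3, e4, e5⟩ := hp
  obtain ⟨z, rfl⟩ := OnePoint.exists_eq_cons_infty hinj h0
  have hz := OnePoint.cons_infty_injective_iff.1 hinj
  have hz0 : z 0 = 0 := OnePoint.coe_injective h1
  have hz1 : z 1 = 1 := OnePoint.coe_injective h2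
  replace e1 : CR ∞ (z 0) (z 1) (z 3) = a 0 := e1
  replace e2 : CR ∞ (z 0) (z 2) (z 4) = a 1 := e2
  replace e3 : CR ∞ (z 1) (z 4) (z 5) = a 2 := e3
  replace e4 : CR (z 0) (z 2) (z 5) (z 6) = a 3 := e4
  replace e5 : CR (z 1) (z 2) (z 3) (z 6) = a 4 := e5
  rw [CR_infty_coe, hz0, hz1] at e1
  rw [CR_infty_coe, div_eq_iff (sub_ne_zero.2 (hz.ne (by decide)))] at e2 e3
  rw [CR_coe, div_eq_iff (mul_ne_zero (sub_ne_zero.2 (hz.ne (by decide)))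
    (sub_ne_zero.2 (hz.ne (by decide))))] at e4 e5
  simp only [hz0, hz1, sub_zero, div_one] at e1 e2 e3 e4 e5
  have hv : z 5 = a 1 * a 2 * z 2 + 1 - a 2 := by linear_combination e3 + a 2 * e2
  rw [e1] at e5
  rw [hv] at e4
  have hroot : (solutionCubic a).a * z 2 ^ 3 + (solutionCubic a).b * z 2 ^ 2
      + (solutionCubic a).c * z 2 + (solutionCubic a).d = 0 := by
    rw [solutionCubic_eval]
    linear_combination (-(a 4 * z 2 + (a 0 - 1 - a 4 * a 0))) * e4
      + ((a 1 * a 2 * (1 - a 3) + a 3) * z 2 + (1 - a 2) * (1 - a 3)) * e5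
  have ht : z 2 ∈ (solutionCubic a).roots :=
    (Cubic.mem_roots_iff (Cubic.ne_zero_of_a_ne_zero (solutionCubic_a_ne_zero ha)) _).2 hroot
  have hw : z 6 = ((a 0 - 1 + a 4) * z 2 - a 4 * a 0) / (a 4 * z 2 + (a 0 - 1 - a 4 * a 0)) := by
    rw [eq_div_iff (den_ne_zero_of_mem_roots hq ht)]
    linear_combination e5
  refine ⟨z 2, ht, ?_⟩
  rw [config]
  congr
  funext i
  congr 1
  fin_cases i
  exacts [hz0.symm, hz1.symm, rfl, e1.symm, e2.symm, hv.symm, hw.symm]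

theorem setOf_isSolution_eq_image (ha : ∀ i, a i ≠ 0 ∧ a i ≠ 1)
    (hq : genericityFactor a ≠ 0) :
    {p | IsSolution a p} = config a '' ↑(solutionCubic a).roots.toFinset := by
  ext p
  simp only [Set.mem_image, Finset.mem_coe, Multiset.mem_toFinset]
  exact ⟨exists_config_eq ha hq, fun ⟨t, ht, hp⟩ ↦ hp ▸ isSolution_config ha hq ht⟩

theorem card_roots_solutionCubic (ha : ∀ i, a i ≠ 0 ∧ a i ≠ 1)
    (hq : genericityFactor a ≠ 0) : (solutionCubic a).roots.toFinset.card = 3 := by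
  simp only [genericityFactor, mul_ne_zero_iff] at hq
  exact Cubic.card_roots_toFinset_eq_three (solutionCubic_a_ne_zero ha) hq.2

end Complex

end CrossRatioT1

theorem crossRatioDegree_eq_three_T1 :
    ∃ q : MvPolynomial (Fin 5) ℂ, q ≠ 0 ∧
      ∀ a : Fin 5 → ℂ, (∀ i, a i ≠ 0 ∧ a i ≠ 1) → MvPolynomial.eval a q ≠ 0 →
        let S : Set (Fin 8 → OnePoint ℂ) :=
          {p | Function.Injective p ∧ p 0 = ∞ ∧ p 1 = ((0 : ℂ) : OnePoint ℂ) ∧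
            p 2 = ((1 : ℂ) : OnePoint ℂ) ∧
            CR (p 0) (p 1) (p 2) (p 4) = a 0 ∧
            CR (p 0) (p 1) (p 3) (p 5) = a 1 ∧
            CR (p 0) (p 2) (p 5) (p 6) = a 2 ∧
            CR (p 1) (p 3) (p 6) (p 7) = a 3 ∧
            CR (p 2) (p 3) (p 4) (p 7) = a 4}
        S.Finite ∧ S.ncard = 3 := by
  refine ⟨CrossRatioT1.genericityPoly, CrossRatioT1.genericityPoly_ne_zero, fun a ha hq ↦ ?_⟩
  rw [CrossRatioT1.eval_genericityPoly] at hq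
  show {p | CrossRatioT1.IsSolution a p}.Finite ∧ {p | CrossRatioT1.IsSolution a p}.ncard = 3
  rw [CrossRatioT1.setOf_isSolution_eq_image ha hq,
    Set.ncard_image_of_injective _ CrossRatioT1.config_injective, Set.ncard_coe_finset,
    CrossRatioT1.card_roots_solutionCubic ha hq]
  exact ⟨Set.toFinite _, rfl⟩
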